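/- arXiv:2002.12014 — 2 statements merged into one kernel-verified Lean document; each statement's English description precedes it below -/
import Mathlib

section
/- Let J_k(r) = r · C̄_k(1/r) for k = 1,…,K where each C̄_k is convex, increasing, C̄_k(0) = 0, and c̄_k = C̄_k′ is bounded by U. If r* minimizes (1/K)Σ_k J_k(r_k) over {r ∈ [r_min, r_max]^K : ‖r‖₁ = B} and r*_ε minimizes it over {r ∈ [r_min, r_max]^K : ‖r‖₁ = B/(1+ε)}, then (1/K)Σ_k J_k(r*_{ε,k}) − (1/K)Σ_k J_k(r*_k) ≤ ε·U (up to constant factor 2 when additionally shrinking the upper box bound to r_max/(1+ε)). -/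
/-!
Shrinking the budget from `B` to `S = B / (1 + ε)` costs little because the old optimum `r*`
can be pushed down to a feasible point `x` of the smaller problem whose *relative* loss
`∑ₖ (1 - xₖ / r*ₖ)` is at most `K ε`: move each coordinate the same fraction of the way
to `r_min`, and bound the result by Cauchy–Schwarz. Since `c̄ₖ ∈ [0, U]`, the map
`r ↦ r C̄ₖ(1/r)` grows by at most `U (1 - x / r)` when `r` decreases to `x`, so the cost of `x`,
hence that of `r*_ε`, exceeds the cost of `r*` by at most `U` times the relative loss.
-/

open Finset

theorem card_sq_le_sum_mul_sum_inv {ι R : Type*} [Field R] [LinearOrder R] [IsStrictOrderedRing R]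
    (s : Finset ι) {r : ι → R} (hr : ∀ k ∈ s, 0 < r k) :
    (#s : R) ^ 2 ≤ (∑ k ∈ s, r k) * ∑ k ∈ s, (r k)⁻¹ := by
  simpa using sum_sq_le_sum_mul_sum_of_sq_le_mul s (r := fun _ ↦ (1 : R))
    (fun k hk ↦ (hr k hk).le) (fun k hk ↦ (inv_pos.2 (hr k hk)).le)
    (fun k hk ↦ by rw [mul_inv_cancel₀ (hr k hk).ne', one_pow])

theorem exists_shrink_toward_floor {ι : Type*} (s : Finset ι) {r : ι → ℝ} {m S : ℝ}
    (hm : 0 < m) (hr : ∀ k ∈ s, m ≤ r k) (hmS : #s * m ≤ S) (hS : S ≤ ∑ k ∈ s, r k) :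
    ∃ x : ι → ℝ, (∀ k ∈ s, m ≤ x k ∧ x k ≤ r k) ∧ ∑ k ∈ s, x k = S ∧
      S * ∑ k ∈ s, (1 - x k / r k) ≤ #s * (∑ k ∈ s, r k - S) := by
  set B := ∑ k ∈ s, r k
  set D := B - #s * m
  -- every coordinate moves the same fraction `t` of the way down to the floor `m`
  -- (if `D = 0` then `S = B`, and the junk value `t = 0` is the right one)
  set t := (B - S) / D
  have ht0 : 0 ≤ t := div_nonneg (by linarith) (by linarith)
  have ht1 : t ≤ 1 := div_le_one_of_le₀ (by linarith) (by linarith)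
  have htD : t * D = B - S := by
    rcases eq_or_lt_of_le (show 0 ≤ D by linarith) with hD | hD
    · rw [← hD, mul_zero]; linarith
    · exact div_mul_cancel₀ _ hD.ne'
  have hrpos : ∀ k ∈ s, 0 < r k := fun k hk ↦ hm.trans_le (hr k hk)
  refine ⟨fun k ↦ r k - t * (r k - m), fun k hk ↦ ?_, ?_, ?_⟩
  · have := hr k hk
    constructor <;> nlinarith
  · simp only [sum_sub_distrib, ← mul_sum, sum_const, nsmul_eq_mul]
    linarith
  · have hloss : ∀ k ∈ s, 1 - (r k - t * (r k - m)) / r k = t * (1 - m * (r k)⁻¹) := by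
      intro k hk
      field_simp [(hrpos k hk).ne']
      ring
    -- Cauchy–Schwarz keeps `1 / m` out of the bound
    have hCS : B * ∑ k ∈ s, (1 - m * (r k)⁻¹) ≤ #s * D := by
      have := card_sq_le_sum_mul_sum_inv s hrpos
      simp only [sum_sub_distrib, ← mul_sum, sum_const, nsmul_eq_mul, mul_one, D]
      nlinarith
    have hnn : 0 ≤ ∑ k ∈ s, (1 - m * (r k)⁻¹) := sum_nonneg fun k hk ↦ by
      rw [sub_nonneg, ← div_eq_mul_inv]
      exact div_le_one_of_le₀ (hr k hk) (hrpos k hk).le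
    rw [sum_congr rfl hloss, ← mul_sum, ← htD]
    calc S * (t * ∑ k ∈ s, (1 - m * (r k)⁻¹)) = t * (S * ∑ k ∈ s, (1 - m * (r k)⁻¹)) := by ring
      _ ≤ t * (#s * D) := mul_le_mul_of_nonneg_left
          ((mul_le_mul_of_nonneg_right hS hnn).trans hCS) ht0
      _ = #s * (t * D) := by ring

theorem mul_apply_one_div_le_add_of_le {f f' : ℝ → ℝ} {U x r : ℝ}
    (hf : ∀ y, HasDerivAt f (f' y) y) (hf' : ∀ y, 0 ≤ y → f' y ∈ Set.Icc 0 U)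
    (hf0 : f 0 = 0) (hx : 0 < x) (hxr : x ≤ r) :
    x * f (1 / x) ≤ r * f (1 / r) + U * (1 - x / r) := by
  have hcont : ContinuousOn f (Set.Ici 0) := fun y _ ↦ (hf y).continuousAt.continuousWithinAt
  have hdiff : DifferentiableOn ℝ f (interior (Set.Ici 0)) :=
    fun y _ ↦ (hf y).differentiableAt.differentiableWithinAt
  have hderiv : ∀ y ∈ interior (Set.Ici (0 : ℝ)), deriv f y ∈ Set.Icc 0 U := fun y hy ↦
    (hf y).deriv ▸ hf' y (le_of_lt (by rwa [interior_Ici] at hy))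
  have hr : 0 < r := hx.trans_le hxr
  have hmono := monotoneOn_of_deriv_nonneg (convex_Ici 0) hcont hdiff fun y hy ↦ (hderiv y hy).1
  have hnn : 0 ≤ f (1 / r) :=
    hf0 ▸ hmono (Set.mem_Ici.2 le_rfl) (by positivity : (0 : ℝ) ≤ 1 / r) (by positivity)
  have hlip : f (1 / x) - f (1 / r) ≤ U * (1 / x - 1 / r) :=
    (convex_Ici 0).image_sub_le_mul_sub_of_deriv_le hcont hdiff (fun y hy ↦ (hderiv y hy).2)
      _ (by positivity : (0 : ℝ) ≤ 1 / r) _ (by positivity : (0 : ℝ) ≤ 1 / x)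
      (one_div_le_one_div_of_le hx hxr)
  calc x * f (1 / x) ≤ x * (f (1 / r) + U * (1 / x - 1 / r)) :=
        mul_le_mul_of_nonneg_left (by linarith) hx.le
    _ = x * f (1 / r) + U * (1 - x / r) := by field_simp
    _ ≤ r * f (1 / r) + U * (1 - x / r) := by gcongr

theorem stmt14_general (K : ℕ) (hK : 0 < K) (U rmin rmax B ε : ℝ)
    (hU : 0 ≤ U) (hrmin : 0 < rmin) (hε : 0 ≤ ε)
    (Cb cb : Fin K → ℝ → ℝ)
    (hC0 : ∀ k, Cb k 0 = 0)
    (hderiv : ∀ k x, HasDerivAt (Cb k) (cb k x) x)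
    (hcb : ∀ k x, 0 ≤ x → cb k x ∈ Set.Icc 0 U)
    (rstar rstarε : Fin K → ℝ)
    (hfeas : ∀ k, rstar k ∈ Set.Icc rmin rmax) (hsum : ∑ k, rstar k = B)
    (hfeasε : ∀ k, rstarε k ∈ Set.Icc rmin rmax)
    (hsumε : ∑ k, rstarε k = B / (1 + ε))
    (hoptε : ∀ x : Fin K → ℝ, (∀ k, x k ∈ Set.Icc rmin rmax) →
      (∑ k, x k = B / (1 + ε)) →
      (1/(K:ℝ)) * ∑ k, rstarε k * Cb k (1 / rstarε k)
        ≤ (1/(K:ℝ)) * ∑ k, x k * Cb k (1 / x k)) :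
    (1/(K:ℝ)) * (∑ k, rstarε k * Cb k (1 / rstarε k))
      - (1/(K:ℝ)) * (∑ k, rstar k * Cb k (1 / rstar k)) ≤ ε * U := by
  set S := B / (1 + ε) with hS
  have hKrmin : (K : ℝ) * rmin ≤ S := by
    simpa [hsumε] using sum_le_sum fun k (_ : k ∈ univ) ↦ (hfeasε k).1
  have hSpos : 0 < S := lt_of_lt_of_le (by positivity) hKrmin
  have hBS : B - S = ε * S := by
    rw [hS]; field_simp; ring
  obtain ⟨x, hx, hxsum, hxloss⟩ := exists_shrink_toward_floor univ hrmin
    (fun k _ ↦ (hfeas k).1) (by simpa using hKrmin) (by linarith [mul_nonneg hε hSpos.le])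
  rw [card_univ, Fintype.card_fin, hsum, hBS] at hxloss
  have hloss : ∑ k, (1 - x k / rstar k) ≤ K * ε :=
    le_of_mul_le_mul_left (by linarith) hSpos
  have hJ : ∑ k, x k * Cb k (1 / x k) ≤ ∑ k, rstar k * Cb k (1 / rstar k) + U * (K * ε) := by
    calc ∑ k, x k * Cb k (1 / x k)
        ≤ ∑ k, (rstar k * Cb k (1 / rstar k) + U * (1 - x k / rstar k)) :=
          sum_le_sum fun k hk ↦ mul_apply_one_div_le_add_of_le (hderiv k) (hcb k) (hC0 k)
            (hrmin.trans_le (hx k hk).1) (hx k hk).2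
      _ ≤ _ := by
        rw [sum_add_distrib, ← mul_sum]
        gcongr
  have hxε := hoptε x (fun k ↦ ⟨(hx k (mem_univ k)).1, (hx k (mem_univ k)).2.trans (hfeas k).2⟩)
    hxsum
  have hscaled := mul_le_mul_of_nonneg_left hJ (by positivity : (0 : ℝ) ≤ 1 / K)
  have hmean : 1 / (K : ℝ) * (U * (K * ε)) = ε * U := by field_simp
  rw [mul_add, hmean] at hscaled
  linarith

theorem stmt14 (K : ℕ) (hK : 0 < K) (U rmin rmax B ε : ℝ)
    (hU : 0 ≤ U) (hrmin : 0 < rmin) (hrr : rmin ≤ rmax) (hε : 0 ≤ ε)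
    (Cb cb : Fin K → ℝ → ℝ)
    (hC0 : ∀ k, Cb k 0 = 0)
    (hCconv : ∀ k, ConvexOn ℝ (Set.Ici 0) (Cb k))
    (hCmono : ∀ k, StrictMonoOn (Cb k) (Set.Ici 0))
    (hderiv : ∀ k x, HasDerivAt (Cb k) (cb k x) x)
    (hcb : ∀ k x, 0 ≤ x → cb k x ∈ Set.Icc 0 U)
    (rstar rstarε : Fin K → ℝ)
    (hfeas : ∀ k, rstar k ∈ Set.Icc rmin rmax) (hsum : ∑ k, rstar k = B)
    (hfeasε : ∀ k, rstarε k ∈ Set.Icc rmin rmax)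
    (hsumε : ∑ k, rstarε k = B / (1 + ε))
    (hopt : ∀ x : Fin K → ℝ, (∀ k, x k ∈ Set.Icc rmin rmax) → (∑ k, x k = B) →
      (1/(K:ℝ)) * ∑ k, rstar k * Cb k (1 / rstar k)
        ≤ (1/(K:ℝ)) * ∑ k, x k * Cb k (1 / x k))
    (hoptε : ∀ x : Fin K → ℝ, (∀ k, x k ∈ Set.Icc rmin rmax) →
      (∑ k, x k = B / (1 + ε)) →
      (1/(K:ℝ)) * ∑ k, rstarε k * Cb k (1 / rstarε k)
        ≤ (1/(K:ℝ)) * ∑ k, x k * Cb k (1 / x k)) :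
    (1/(K:ℝ)) * (∑ k, rstarε k * Cb k (1 / rstarε k))
      - (1/(K:ℝ)) * (∑ k, rstar k * Cb k (1 / rstar k)) ≤ ε * U :=
  stmt14_general K hK U rmin rmax B ε hU hrmin hε Cb cb hC0 hderiv hcb rstar rstarε hfeas hsum
    hfeasε hsumε hoptε
end

section
/- Let J(r) = r·C̄(1/r) with C̄ convex increasing, C̄(0)=0, differentiable with derivative c̄ ≤ U. Then |J′(r)| · r ≤ U for all r > 0, i.e., the gradient in the local norm induced by the log barrier Hessian is uniformly bounded by U. -/
theorem stmt17 (U : ℝ) (hU : 0 ≤ U) (c : ℝ → ℝ) (hcont : Continuous c)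
    (hc : ∀ s, 0 ≤ s → c s ∈ Set.Icc 0 U)
    (hmono : MonotoneOn c (Set.Ici 0))
    (r : ℝ) (hr : 0 < r) :
    |deriv (fun ρ : ℝ => ρ * ∫ s in (0:ℝ)..(1/ρ), c s) r| * r ≤ U := by
  have hrne : r ≠ 0 := hr.ne'
  have hinvpos : 0 < 1 / r := by positivity
  -- derivative of the integral
  have hG : HasDerivAt (fun x : ℝ => ∫ s in (0:ℝ)..x, c s) (c (1/r)) (1/r) :=
    intervalIntegral.integral_hasDerivAt_right (hcont.intervalIntegrable _ _)
      (hcont.stronglyMeasurableAtFilter _ _) hcont.continuousAt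
  have hinv : HasDerivAt (fun ρ : ℝ => 1/ρ) (-(1/r^2)) r := by
    simpa using (hasDerivAt_inv hrne)
  have hcomp : HasDerivAt (fun ρ : ℝ => ∫ s in (0:ℝ)..(1/ρ), c s)
      (c (1/r) * (-(1/r^2))) r := by
    simpa [Function.comp_def] using hG.comp r hinv
  have hF : HasDerivAt (fun ρ : ℝ => ρ * ∫ s in (0:ℝ)..(1/ρ), c s)
      (1 * (∫ s in (0:ℝ)..(1/r), c s) + r * (c (1/r) * (-(1/r^2)))) r :=
    (hasDerivAt_id r).mul hcomp
  have hderiv : deriv (fun ρ : ℝ => ρ * ∫ s in (0:ℝ)..(1/ρ), c s) r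
      = (∫ s in (0:ℝ)..(1/r), c s) - c (1/r) / r := by
    rw [hF.deriv]; field_simp; ring
  rw [hderiv]
  set I := ∫ s in (0:ℝ)..(1/r), c s with hI
  have hIle : I ≤ c (1/r) / r := by
    have : I ≤ ∫ s in (0:ℝ)..(1/r), c (1/r) := by
      apply intervalIntegral.integral_mono_on hinvpos.le
        (hcont.intervalIntegrable _ _) (intervalIntegrable_const)
      intro x hx
      exact hmono hx.1 hinvpos.le hx.2
    simpa [div_eq_inv_mul, mul_comm] using this
  have hInonneg : 0 ≤ I := by
    apply intervalIntegral.integral_nonneg hinvpos.le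
    intro x hx; exact (hc x hx.1).1
  have hcU : c (1/r) ≤ U := (hc _ hinvpos.le).2
  have hcnn : 0 ≤ c (1/r) := (hc _ hinvpos.le).1
  have hcUr : c (1/r) / r ≤ U / r := by gcongr
  have habs : |I - c (1/r) / r| ≤ U / r := by
    rw [abs_le]
    constructor
    · linarith
    · have : 0 ≤ c (1/r) / r := div_nonneg hcnn hr.le
      have : 0 ≤ U / r := div_nonneg hU hr.le
      linarith
  calc |I - c (1/r) / r| * r ≤ (U / r) * r :=
        mul_le_mul_of_nonneg_right habs hr.le
    _ = U := by field_simp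
end
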